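/- Let R be a graded radically principal commutative G-graded ring and I any graded ideal of R. Then the quotient ring R/I is graded radically principal. -/

import Mathlib

open DirectSum

variable {G A : Type*} [AddGroup G] [DecidableEq G] [CommRing A]

def gradedRadical (𝒜 : G → AddSubgroup A) [GradedRing 𝒜] (I : Ideal A) : Set A :=
  {x | ∀ g : G, ∃ n : ℕ, ((DirectSum.decompose 𝒜 x g : A)) ^ n ∈ I}

def IsGradedRadicallyPrincipal (𝒜 : G → AddSubgroup A) [GradedRing 𝒜] (I : Ideal A) : Prop :=
  ∃ c : A, SetLike.IsHomogeneousElem 𝒜 c ∧ gradedRadical 𝒜 I = gradedRadical 𝒜 (Ideal.span {c})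

def GradedRadicallyPrincipalRing (𝒜 : G → AddSubgroup A) [GradedRing 𝒜] : Prop :=
  ∀ I : Ideal A, I.IsHomogeneous 𝒜 → IsGradedRadicallyPrincipal 𝒜 I

def IsGradedPrime (𝒜 : G → AddSubgroup A) [GradedRing 𝒜] (P : Ideal A) : Prop :=
  P ≠ ⊤ ∧ P.IsHomogeneous 𝒜 ∧
    ∀ ⦃x y : A⦄, SetLike.IsHomogeneousElem 𝒜 x → SetLike.IsHomogeneousElem 𝒜 y → x * y ∈ P →
      x ∈ P ∨ y ∈ P

/-!
A graded ring hom `f : A → B` commutes with taking homogeneous components, so the graded radical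
of an ideal `L` of `B` pulls back to the graded radical of `f⁻¹ L`. For a homogeneous ideal `J`
of `B`, choose a homogeneous `c` with `Grad(f⁻¹ J) = Grad(⟨c⟩)`; then `f c ∈ √J`, so
`⟨c⟩ ⊆ f⁻¹ ⟨f c⟩ ⊆ √(f⁻¹ J)`, and squeezing gives `Grad(f⁻¹ J) = Grad(f⁻¹ ⟨f c⟩)`. When `f` is
surjective this says `Grad(J) = Grad(⟨f c⟩)`. The quotient map `A → A/I` is such an `f`.
-/

section GradedRadical

variable (𝒜 : G → AddSubgroup A) [GradedRing 𝒜]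

theorem mem_gradedRadical_iff {I : Ideal A} {x : A} :
    x ∈ gradedRadical 𝒜 I ↔ ∀ g, (decompose 𝒜 x g : A) ∈ I.radical :=
  Iff.rfl

theorem gradedRadical_mono {I J : Ideal A} (h : I ≤ J.radical) :
    gradedRadical 𝒜 I ⊆ gradedRadical 𝒜 J :=
  fun _ hx g => Ideal.radical_le_radical_iff.mpr h (hx g)

variable {𝒜}

theorem SetLike.IsHomogeneousElem.mem_gradedRadical_iff {I : Ideal A} {c : A}
    (hc : SetLike.IsHomogeneousElem 𝒜 c) : c ∈ gradedRadical 𝒜 I ↔ c ∈ I.radical := by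
  obtain ⟨i, hi⟩ := hc
  refine ⟨fun h => decompose_of_mem_same 𝒜 hi ▸ h i, fun h g => ?_⟩
  by_cases hig : i = g
  · subst hig
    rwa [decompose_of_mem_same 𝒜 hi]
  · rw [decompose_of_mem_ne 𝒜 hi hig]
    exact I.radical.zero_mem

end GradedRadical

section GradedRingHom

variable {B : Type*} [CommRing B] {𝒜 : G → AddSubgroup A} [GradedRing 𝒜]
  {ℬ : G → AddSubgroup B} [GradedRing ℬ]

theorem GradedRingHom.map_mem_gradedRadical_iff (f : 𝒜 →+*ᵍ ℬ) (L : Ideal B) (x : A) :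
    f x ∈ gradedRadical ℬ L ↔ x ∈ gradedRadical 𝒜 (L.comap f) := by
  simp only [mem_gradedRadical_iff, ← Ideal.comap_radical, Ideal.mem_comap,
    GradedRingHom.map_directSumDecompose]

theorem Ideal.IsHomogeneous.comap_gradedRingHom {L : Ideal B} (hL : L.IsHomogeneous ℬ)
    (f : 𝒜 →+*ᵍ ℬ) : (L.comap f).IsHomogeneous 𝒜 := fun g x hx => by
  simpa only [Ideal.mem_comap, GradedRingHom.map_directSumDecompose] using hL g hx

theorem GradedRadicallyPrincipalRing.of_surjective (hR : GradedRadicallyPrincipalRing 𝒜)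
    (f : 𝒜 →+*ᵍ ℬ) (hf : Function.Surjective f) : GradedRadicallyPrincipalRing ℬ := by
  intro J hJ
  obtain ⟨c, hc, hK⟩ := hR _ (hJ.comap_gradedRingHom f)
  have hfc : f c ∈ J.radical := by
    rw [← Ideal.mem_comap, Ideal.comap_radical, ← hc.mem_gradedRadical_iff, hK,
      hc.mem_gradedRadical_iff]
    exact Ideal.le_radical (Ideal.mem_span_singleton_self c)
  have hspan_le : Ideal.span {c} ≤ ((Ideal.span {f c}).comap f).radical :=
    ((Ideal.span_singleton_le_iff_mem _).mpr
      (Ideal.mem_comap.mpr (Ideal.mem_span_singleton_self (f c)))).trans Ideal.le_radical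
  have hcomap_le : (Ideal.span {f c}).comap f ≤ (J.comap f).radical := by
    rw [← Ideal.comap_radical]
    exact Ideal.comap_mono ((Ideal.span_singleton_le_iff_mem _).mpr hfc)
  obtain ⟨i, hi⟩ := hc
  refine ⟨f c, ⟨i, Graded.map_mem f hi⟩, Set.ext fun y => ?_⟩
  obtain ⟨x, rfl⟩ := hf y
  rw [f.map_mem_gradedRadical_iff, f.map_mem_gradedRadical_iff]
  exact ⟨fun h => gradedRadical_mono 𝒜 hspan_le (hK ▸ h),
    fun h => gradedRadical_mono 𝒜 hcomap_le h⟩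

end GradedRingHom

theorem stmt_6_general (𝒜 : G → AddSubgroup A) [GradedRing 𝒜]
    (hR : GradedRadicallyPrincipalRing 𝒜) (I : Ideal A)
    (ℬ : G → AddSubgroup (A ⧸ I)) [GradedRing ℬ]
    (hℬ : ∀ g, ℬ g = (𝒜 g).map ((Ideal.Quotient.mk I : A →+* A ⧸ I) : A →+ A ⧸ I)) :
    GradedRadicallyPrincipalRing ℬ :=
  hR.of_surjective
    { toRingHom := Ideal.Quotient.mk I
      map_mem := fun {g} {_} hx => hℬ g ▸ AddSubgroup.mem_map_of_mem _ hx }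
    Ideal.Quotient.mk_surjective

theorem stmt_6 (𝒜 : G → AddSubgroup A) [GradedRing 𝒜]
    (hR : GradedRadicallyPrincipalRing 𝒜) (I : Ideal A) (hI : I.IsHomogeneous 𝒜)
    (ℬ : G → AddSubgroup (A ⧸ I)) [GradedRing ℬ]
    (hℬ : ∀ g, ℬ g = (𝒜 g).map ((Ideal.Quotient.mk I : A →+* A ⧸ I) : A →+ A ⧸ I)) :
    GradedRadicallyPrincipalRing ℬ :=
  stmt_6_general 𝒜 hR I ℬ hℬ
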